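/- The Cholesky factorization map, sending a positive definite symmetric matrix A ∈ ℝ^{k×k} to the unique upper triangular matrix R with positive diagonal entries such that A = R^T R, is continuous on the set of positive definite matrices. -/

import Mathlib

/-!
`F` is a right inverse of the continuous map `R ↦ Rᵀ * R` on positive definite matrices. Near `a`
the factors `F A` stay in a compact set of upper triangular matrices with nonnegative diagonal,
because every entry satisfies `R i j ^ 2 ≤ (Rᵀ * R) j j`. A cluster point `R` of `F` at `a` lies in
that set and satisfies `Rᵀ * R = a`; as `a` is invertible, the diagonal of `R` is positive, so `R`
is the Cholesky factor `F a` by uniqueness. A function eventually in a compact set with a single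
cluster point converges to it.
-/

open Matrix Filter Topology Metric

attribute [local instance] Matrix.normedAddCommGroup Matrix.normedSpace

theorem continuousWithinAt_of_continuous_leftInvOn {X Y : Type*} [TopologicalSpace X]
    [T2Space X] [TopologicalSpace Y] {f : X → Y} {g : Y → X} {s : Set X} {a : X} {K : Set Y}
    (hK : IsCompact K) (hg : Continuous g) (hgf : Set.LeftInvOn g f s)
    (hfK : ∀ᶠ x in 𝓝[s] a, f x ∈ K) (hinj : ∀ y ∈ K, g y = a → y = f a) :
    ContinuousWithinAt f s a := by
  refine hK.tendsto_nhds_of_unique_mapClusterPt hfK fun y hyK hy => hinj y hyK ?_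
  have hgy : MapClusterPt (g y) (𝓝[s] a) (g ∘ f) := hy.continuousAt_comp hg.continuousAt
  have hgf' : g ∘ f =ᶠ[𝓝[s] a] id := eventually_mem_nhdsWithin.mono hgf
  exact eq_of_nhds_neBot <|
    (mapClusterPt_id_iff.mp (hgy.congrFun hgf')).mono nhdsWithin_le_nhds

namespace Matrix

theorem sq_apply_le_transpose_mul_self_apply {m n R : Type*} [Fintype m] [CommRing R]
    [LinearOrder R] [IsOrderedRing R] (M : Matrix m n R) (i : m) (j : n) :
    M i j ^ 2 ≤ (Mᵀ * M) j j := by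
  rw [mul_apply, sq]
  exact Finset.single_le_sum (f := fun l => M l j * M l j) (fun l _ => mul_self_nonneg _)
    (Finset.mem_univ i)

theorem norm_le_sqrt_norm_transpose_mul_self {m n : Type*} [Fintype m] [Fintype n]
    (M : Matrix m n ℝ) : ‖M‖ ≤ √‖Mᵀ * M‖ := by
  refine (norm_le_iff (Real.sqrt_nonneg _)).mpr fun i j => ?_
  rw [Real.norm_eq_abs, ← Real.sqrt_sq_eq_abs]
  exact Real.sqrt_le_sqrt <| (M.sq_apply_le_transpose_mul_self_apply i j).trans <|
    (Real.le_norm_self _).trans (norm_entry_le_entrywise_sup_norm _)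

theorem det_ne_zero_of_forall_dotProduct_mulVec_pos {n 𝕜 : Type*} [Fintype n] [DecidableEq n]
    [Field 𝕜] [Preorder 𝕜] {A : Matrix n n 𝕜} (hA : ∀ x, x ≠ 0 → 0 < x ⬝ᵥ A *ᵥ x) :
    A.det ≠ 0 := fun h => by
  obtain ⟨x, hx, hAx⟩ := exists_mulVec_eq_zero_iff.mpr h
  simpa [hAx] using hA x hx

variable {n : Type*} [LinearOrder n]

theorem isClosed_setOf_isUpperTriangular_diag_nonneg {R : Type*} [Zero R] [PartialOrder R]
    [TopologicalSpace R] [OrderClosedTopology R] :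
    IsClosed {M : Matrix n n R | M.IsUpperTriangular ∧ ∀ i, 0 ≤ M i i} := by
  simp only [IsUpperTriangular, BlockTriangular, Set.ofPred_and, Set.ofPred_forall]
  exact (isClosed_iInter fun i => isClosed_iInter fun j => isClosed_iInter fun _ =>
      isClosed_eq (continuous_id.matrix_elem i j) continuous_const).inter
    (isClosed_iInter fun i => isClosed_le continuous_const (continuous_id.matrix_elem i i))

variable [Fintype n] [DecidableEq n]

theorem IsUpperTriangular.diag_pos_of_det_ne_zero {R : Type*} [CommRing R] [PartialOrder R]
    {M : Matrix n n R} (hM : M.IsUpperTriangular) (hM0 : ∀ i, 0 ≤ M i i) (hdet : M.det ≠ 0)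
    (i : n) : 0 < M i i :=
  (hM0 i).lt_of_ne fun h => hdet <| by
    rw [det_of_isUpperTriangular hM]
    exact Finset.prod_eq_zero (Finset.mem_univ i) h.symm

theorem IsUpperTriangular.isDiag_of_transpose_mul_self_eq_one {R : Type*} [CommRing R]
    {M : Matrix n n R} (hM : M.IsUpperTriangular) (hMM : Mᵀ * M = 1) : M.IsDiag := by
  have : Invertible M := invertibleOfLeftInverse M Mᵀ hMM
  have hMt : Mᵀ.IsUpperTriangular :=
    inv_eq_left_inv hMM ▸ blockTriangular_inv_of_blockTriangular hM
  intro i j hij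
  rcases hij.lt_or_gt with h | h
  · exact hMt h
  · exact hM h

theorem IsUpperTriangular.eq_of_transpose_mul_self_eq {𝕜 : Type*} [Field 𝕜] [LinearOrder 𝕜]
    [IsStrictOrderedRing 𝕜] {R S : Matrix n n 𝕜} (hR : R.IsUpperTriangular)
    (hS : S.IsUpperTriangular) (hRd : ∀ i, 0 < R i i) (hSd : ∀ i, 0 < S i i)
    (h : Rᵀ * R = Sᵀ * S) : R = S := by
  have : Invertible S := S.invertibleOfIsUnitDet <| isUnit_iff_ne_zero.mpr <| by
    rw [det_of_isUpperTriangular hS]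
    exact (Finset.prod_pos fun i _ => hSd i).ne'
  have hM : (R * S⁻¹).IsUpperTriangular := hR.mul (blockTriangular_inv_of_blockTriangular hS)
  have hMM : (R * S⁻¹)ᵀ * (R * S⁻¹) = 1 := by
    rw [transpose_mul, Matrix.mul_assoc, ← Matrix.mul_assoc Rᵀ, h, Matrix.mul_assoc,
      mul_inv_of_invertible, Matrix.mul_one, ← transpose_mul, mul_inv_of_invertible, transpose_one]
  obtain ⟨d, hd⟩ : ∃ d, R * S⁻¹ = diagonal d :=
    ⟨_, (hM.isDiag_of_transpose_mul_self_eq_one hMM).diagonal_diag.symm⟩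
  have hRdS : R = diagonal d * S := by rw [← hd, inv_mul_cancel_right_of_invertible]
  have hd_pos : ∀ i, 0 < d i := fun i =>
    pos_of_mul_pos_left (by simpa [hRdS] using hRd i) (hSd i).le
  have hd_sq : ∀ i, d i * d i = 1 := fun i => by
    simpa [hd] using congrFun₂ hMM i i
  have hd_one : d = fun _ => 1 := funext fun i =>
    (mul_self_eq_one_iff.mp (hd_sq i)).resolve_right (by linarith [hd_pos i])
  rw [hRdS, hd_one, diagonal_one, Matrix.one_mul]

end Matrix

theorem cholesky_continuous_general (k : ℕ)
    (F : Matrix (Fin k) (Fin k) ℝ → Matrix (Fin k) (Fin k) ℝ)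
    (hF : ∀ A : Matrix (Fin k) (Fin k) ℝ, A.IsSymm → (∀ x : Fin k → ℝ, x ≠ 0 → 0 < x ⬝ᵥ A.mulVec x) →
      (∀ i j : Fin k, (j : ℕ) < (i : ℕ) → F A i j = 0) ∧
      (∀ i : Fin k, 0 < F A i i) ∧
      A = (F A)ᵀ * F A) :
    ContinuousOn F {A : Matrix (Fin k) (Fin k) ℝ |
      A.IsSymm ∧ ∀ x : Fin k → ℝ, x ≠ 0 → 0 < x ⬝ᵥ A.mulVec x} := by
  rintro a ⟨haS, haPD⟩
  obtain ⟨haU, haPos, haEq⟩ := hF a haS haPD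
  refine continuousWithinAt_of_continuous_leftInvOn (g := fun R => Rᵀ * R)
    (K := {R | R.IsUpperTriangular ∧ ∀ i, 0 ≤ R i i} ∩ closedBall 0 √(‖a‖ + 1))
    ((isCompact_closedBall _ _).inter_left isClosed_setOf_isUpperTriangular_diag_nonneg)
    (by fun_prop) (fun A hA => (hF A hA.1 hA.2).2.2.symm) ?_ ?_
  · have hnorm : ∀ᶠ A in 𝓝 a, ‖A‖ < ‖a‖ + 1 :=
      (continuous_norm.tendsto a).eventually_lt_const (lt_add_one _)
    filter_upwards [self_mem_nhdsWithin, nhdsWithin_le_nhds hnorm] with A ⟨hAS, hAPD⟩ hA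
    obtain ⟨hU, hpos, hAeq⟩ := hF A hAS hAPD
    refine ⟨⟨fun i j h => hU i j h, fun i => (hpos i).le⟩, mem_closedBall_zero_iff.mpr ?_⟩
    calc ‖F A‖ ≤ √‖(F A)ᵀ * F A‖ := norm_le_sqrt_norm_transpose_mul_self _
      _ = √‖A‖ := by rw [← hAeq]
      _ ≤ √(‖a‖ + 1) := Real.sqrt_le_sqrt hA.le
  · rintro R ⟨⟨hRU, hR0⟩, -⟩ hRa
    have hdet : R.det ≠ 0 := fun h => det_ne_zero_of_forall_dotProduct_mulVec_pos haPD <| by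
      rw [← hRa, det_mul, h, mul_zero]
    exact hRU.eq_of_transpose_mul_self_eq (fun i j h => haU i j h)
      (hRU.diag_pos_of_det_ne_zero hR0 hdet) haPos (hRa.trans haEq)

/-- The Cholesky factorization map, sending a positive definite symmetric matrix
A ∈ ℝ^{k×k} to the unique upper triangular R with positive diagonal entries such that
A = Rᵀ R, is continuous on the set of positive definite matrices. -/
theorem cholesky_continuous (k : ℕ) (hk : 0 < k)
    (F : Matrix (Fin k) (Fin k) ℝ → Matrix (Fin k) (Fin k) ℝ)
    (hF : ∀ A : Matrix (Fin k) (Fin k) ℝ, A.IsSymm → (∀ x : Fin k → ℝ, x ≠ 0 → 0 < x ⬝ᵥ A.mulVec x) →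
      (∀ i j : Fin k, (j : ℕ) < (i : ℕ) → F A i j = 0) ∧
      (∀ i : Fin k, 0 < F A i i) ∧
      A = (F A)ᵀ * F A) :
    ContinuousOn F {A : Matrix (Fin k) (Fin k) ℝ |
      A.IsSymm ∧ ∀ x : Fin k → ℝ, x ≠ 0 → 0 < x ⬝ᵥ A.mulVec x} :=
  cholesky_continuous_general k F hF
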